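/- arXiv:1201.4944 — 2 statements merged into one kernel-verified Lean document; each statement's English description precedes it below -/
import Mathlib

section
/- Let γ, σ : [0,∞) → Δ be unit-speed geodesic rays for the Poincaré distance (that is, d^K_Δ(γ(s), γ(t)) = |s − t| and d^K_Δ(σ(s), σ(t)) = |s − t| for all s, t ≥ 0) with lim_{t→∞} γ(t) = lim_{t→∞} σ(t) = z ∈ ∂Δ. Suppose γ(0) and σ(0) lie on the same horocycle at z, i.e. |z − γ(0)|²/(1 − |γ(0)|²) = |z − σ(0)|²/(1 − |σ(0)|²). Then there is a constant D > 0 such that d^K_Δ(γ(t), σ(t)) ≤ D e^{−t} for all t ≥ 0. -/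
open Set Filter Metric Bornology

noncomputable section

/-- The open unit disc in `ℂ`. -/
def unitDisc : Set ℂ := {z : ℂ | ‖z‖ < 1}

/-- The Poincaré distance on the unit disc. -/
def poincareDist (z w : ℂ) : ℝ :=
  Real.log ((1 + ‖(z - w) / (1 - (starRingEnd ℂ) w * z)‖) /
            (1 - ‖(z - w) / (1 - (starRingEnd ℂ) w * z)‖))

variable {E : Type*} [NormedAddCommGroup E] [NormedSpace ℂ E]

/-- A holomorphic chain from `p` to `q` in `D`, i.e. finitely many holomorphic maps
`φ i : Δ → D` and points `a i, b i ∈ Δ` with `φ 0 (a 0) = p`, consecutive matching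
conditions, and `φ m (b m) = q`. -/
def IsHolChain (D : Set E) (p q : E) (m : ℕ)
    (φ : Fin (m + 1) → ℂ → E) (a b : Fin (m + 1) → ℂ) : Prop :=
  (∀ i, DifferentiableOn ℂ (φ i) unitDisc ∧ Set.MapsTo (φ i) unitDisc D ∧
    a i ∈ unitDisc ∧ b i ∈ unitDisc) ∧
  φ 0 (a 0) = p ∧ φ (Fin.last m) (b (Fin.last m)) = q ∧
  ∀ i : Fin m, φ i.castSucc (b i.castSucc) = φ i.succ (a i.succ)

/-- The Kobayashi (pseudo)distance on a domain `D ⊆ ℂⁿ`. -/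
def kobayashiDist (D : Set E) (p q : E) : ℝ :=
  sInf {s : ℝ | ∃ (m : ℕ) (φ : Fin (m + 1) → ℂ → E) (a b : Fin (m + 1) → ℂ),
    IsHolChain D p q m φ a b ∧ s = ∑ i, poincareDist (a i) (b i)}

/-- The Kobayashi infinitesimal (pseudo)metric on a domain `D ⊆ ℂⁿ`. -/
def kobayashiMetric (D : Set E) (p v : E) : ℝ :=
  sInf {c : ℝ | ∃ r : ℝ, 0 < r ∧ ∃ φ : ℂ → E, DifferentiableOn ℂ φ unitDisc ∧
    Set.MapsTo φ unitDisc D ∧ φ 0 = p ∧ deriv φ 0 = r • v ∧ c = 1 / r}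

/-- `Ω` is a bounded `C^k` strongly convex domain in `ℂⁿ`: it is open, bounded, nonempty,
and admits a `C^k` defining function `ρ` with nonvanishing gradient on `∂Ω` whose real
Hessian is positive definite at every boundary point. -/
def IsStronglyConvex {n : ℕ} (Ω : Set (EuclideanSpace ℂ (Fin n))) (k : ℕ) : Prop :=
  IsOpen Ω ∧ Bornology.IsBounded Ω ∧ Ω.Nonempty ∧
  ∃ ρ : EuclideanSpace ℂ (Fin n) → ℝ, ContDiff ℝ k ρ ∧
    Ω = {z | ρ z < 0} ∧
    (∀ z ∈ frontier Ω, fderiv ℝ ρ z ≠ 0) ∧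
    (∀ z ∈ frontier Ω, ∀ v : EuclideanSpace ℂ (Fin n), v ≠ 0 →
      0 < fderiv ℝ (fderiv ℝ ρ) z v v)

/-- `Ω` is a bounded `C²` strongly pseudoconvex domain in `ℂⁿ`: it is open, bounded,
nonempty, and admits a `C²` defining function `ρ` with nonvanishing gradient on `∂Ω` whose
Levi form (expressed via the real Hessian as `H(v,v) + H(iv,iv)`) is positive on all
nonzero complex tangent vectors at every boundary point. -/
def IsStronglyPseudoconvex {n : ℕ} (Ω : Set (EuclideanSpace ℂ (Fin n))) : Prop :=
  IsOpen Ω ∧ Bornology.IsBounded Ω ∧ Ω.Nonempty ∧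
  ∃ ρ : EuclideanSpace ℂ (Fin n) → ℝ, ContDiff ℝ 2 ρ ∧
    Ω = {z | ρ z < 0} ∧
    (∀ z ∈ frontier Ω, fderiv ℝ ρ z ≠ 0) ∧
    (∀ z ∈ frontier Ω, ∀ v : EuclideanSpace ℂ (Fin n), v ≠ 0 →
      fderiv ℝ ρ z v = 0 → fderiv ℝ ρ z (Complex.I • v) = 0 →
      0 < fderiv ℝ (fderiv ℝ ρ) z v v +
          fderiv ℝ (fderiv ℝ ρ) z (Complex.I • v) (Complex.I • v))

/-- A complex geodesic of `Ω`: a holomorphic map `Δ → Ω` which is an isometry from the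
Poincaré distance to the Kobayashi distance of `Ω`. -/
def IsComplexGeodesic (Ω : Set E) (g : ℂ → E) : Prop :=
  Set.MapsTo g unitDisc Ω ∧ DifferentiableOn ℂ g unitDisc ∧
  ∀ ζ ∈ unitDisc, ∀ η ∈ unitDisc, kobayashiDist Ω (g ζ) (g η) = poincareDist ζ η

-- normSq identity
lemma normSq_one_sub_conj_mul (w1 w2 : ℂ) :
    Complex.normSq (1 - (starRingEnd ℂ) w2 * w1) =
      Complex.normSq (w1 - w2) + (1 - Complex.normSq w1) * (1 - Complex.normSq w2) := by
  simp [Complex.normSq_apply, Complex.sub_re, Complex.sub_im, Complex.mul_re, Complex.mul_im,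
    Complex.one_re, Complex.one_im, Complex.conj_re, Complex.conj_im]
  ring

lemma abs_sub_lt_abs_one_sub (w1 w2 : ℂ) (h1 : ‖w1‖ < 1) (h2 : ‖w2‖ < 1) :
    ‖w1 - w2‖ < ‖1 - (starRingEnd ℂ) w2 * w1‖ := by
  have hn1 : Complex.normSq w1 < 1 := by
    have := Complex.sq_norm w1
    nlinarith [norm_nonneg w1]
  have hn2 : Complex.normSq w2 < 1 := by
    have := Complex.sq_norm w2
    nlinarith [norm_nonneg w2]
  have key := normSq_one_sub_conj_mul w1 w2
  rw [Complex.norm_def, Complex.norm_def]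
  apply Real.sqrt_lt_sqrt (Complex.normSq_nonneg _)
  nlinarith [Complex.normSq_nonneg (w1 - w2)]

lemma tau_lt_one (w1 w2 : ℂ) (h1 : ‖w1‖ < 1) (h2 : ‖w2‖ < 1) :
    ‖(w1 - w2) / (1 - (starRingEnd ℂ) w2 * w1)‖ < 1 := by
  have h := abs_sub_lt_abs_one_sub w1 w2 h1 h2
  rw [norm_div]
  have hpos : 0 < ‖1 - (starRingEnd ℂ) w2 * w1‖ :=
    lt_of_le_of_lt (norm_nonneg _) h
  rw [div_lt_one hpos]
  exact h

-- S^2 = Q^2 + 4 im im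
lemma abs_sub_conj_sq (a b : ℂ) :
    ‖a - (starRingEnd ℂ) b‖ ^ 2 = ‖a - b‖ ^ 2 + 4 * a.im * b.im := by
  rw [Complex.sq_norm, Complex.sq_norm]
  simp [Complex.normSq_apply, Complex.sub_re, Complex.sub_im, Complex.conj_re, Complex.conj_im]
  ring

/-- Cayley-type transform sending the disc to the upper half-plane, `z` to `∞`. -/
def cayley (z w : ℂ) : ℂ := Complex.I * (z + w) / (z - w)

lemma conj_mul_self {z : ℂ} (hz : ‖z‖ = 1) : (starRingEnd ℂ) z * z = 1 := by
  rw [mul_comm, Complex.mul_conj]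
  norm_cast
  rw [← Complex.sq_norm, hz]; norm_num

lemma z_ne_w {z w : ℂ} (hz : ‖z‖ = 1) (hw : ‖w‖ < 1) : z ≠ w := by
  intro h; subst h; exact absurd hz (ne_of_lt hw)

lemma z_ne_zero {z : ℂ} (hz : ‖z‖ = 1) : z ≠ 0 := by
  intro h; rw [h] at hz; simp at hz

lemma cayley_im {z w : ℂ} (hz : ‖z‖ = 1) (hw : ‖w‖ < 1) :
    (cayley z w).im = (1 - Complex.normSq w) / Complex.normSq (z - w) := by
  have hzw : z - w ≠ 0 := sub_ne_zero.2 (z_ne_w hz hw)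
  have hre : z.re ^ 2 + z.im ^ 2 = 1 := by
    have := Complex.sq_norm z
    rw [hz] at this
    simp [Complex.normSq_apply] at this; nlinarith
  rw [cayley, div_eq_mul_inv, Complex.inv_def, ← mul_assoc, Complex.mul_im]
  simp only [Complex.ofReal_re, Complex.ofReal_im, mul_zero, zero_mul, add_zero, zero_add]
  rw [div_eq_mul_inv]
  congr 1
  simp only [Complex.mul_im, Complex.mul_re, Complex.I_re, Complex.I_im, Complex.add_re,
    Complex.add_im, Complex.conj_re, Complex.conj_im, Complex.sub_re, Complex.sub_im,
    Complex.normSq_apply]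
  ring_nf
  nlinarith [hre]

lemma cayley_im_pos {z w : ℂ} (hz : ‖z‖ = 1) (hw : ‖w‖ < 1) :
    0 < (cayley z w).im := by
  rw [cayley_im hz hw]
  have h1 : Complex.normSq w < 1 := by
    have := Complex.sq_norm w; nlinarith [norm_nonneg w]
  have h2 : 0 < Complex.normSq (z - w) := Complex.normSq_pos.2 (sub_ne_zero.2 (z_ne_w hz hw))
  exact div_pos (by linarith) h2

lemma cayley_ratio {z w1 w2 : ℂ} (hz : ‖z‖ = 1)
    (hw1 : ‖w1‖ < 1) (hw2 : ‖w2‖ < 1) :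
    ‖(w1 - w2) / (1 - (starRingEnd ℂ) w2 * w1)‖ =
      ‖cayley z w1 - cayley z w2‖ /
        ‖cayley z w1 - (starRingEnd ℂ) (cayley z w2)‖ := by
  have hzw1 : z - w1 ≠ 0 := sub_ne_zero.2 (z_ne_w hz hw1)
  have hzw2 : z - w2 ≠ 0 := sub_ne_zero.2 (z_ne_w hz hw2)
  have hz0 : z ≠ 0 := z_ne_zero hz
  have hzz := conj_mul_self hz
  have hA : (cayley z w1 - cayley z w2) * ((z - w1) * (z - w2)) =
      2 * Complex.I * z * (w1 - w2) := by
    rw [cayley, cayley]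
    field_simp
    ring
  have hc2 : (starRingEnd ℂ) z - (starRingEnd ℂ) w2 ≠ 0 := by
    intro h
    apply hzw2
    have := congrArg (starRingEnd ℂ) h
    simpa [map_sub] using this
  have hB : (cayley z w1 - (starRingEnd ℂ) (cayley z w2)) *
      ((z - w1) * (starRingEnd ℂ) (z - w2)) =
      2 * Complex.I * (1 - (starRingEnd ℂ) w2 * w1) := by
    have expand : (cayley z w1 - (starRingEnd ℂ) (cayley z w2)) *
        ((z - w1) * (starRingEnd ℂ) (z - w2)) =
        2 * Complex.I * ((starRingEnd ℂ) z * z - (starRingEnd ℂ) w2 * w1) := by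
      rw [cayley, cayley]
      simp only [map_div₀, map_mul, map_add, map_sub, Complex.conj_I]
      field_simp
      ring
    rw [expand, hzz]
  have habsA : ‖cayley z w1 - cayley z w2‖ *
      (‖z - w1‖ * ‖z - w2‖) = 2 * ‖w1 - w2‖ := by
    have h := congrArg (fun x : ℂ => ‖x‖) hA
    simp only [norm_mul, Complex.norm_two, Complex.norm_I, hz] at h
    linear_combination h
  have habsB : ‖cayley z w1 - (starRingEnd ℂ) (cayley z w2)‖ *
      (‖z - w1‖ * ‖z - w2‖) =
      2 * ‖1 - (starRingEnd ℂ) w2 * w1‖ := by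
    have h := congrArg (fun x : ℂ => ‖x‖) hB
    simp only [norm_mul, Complex.norm_two, Complex.norm_I, Complex.norm_conj] at h
    linear_combination h
  have hK : 0 < ‖z - w1‖ * ‖z - w2‖ := by
    have h1 := norm_pos_iff.2 hzw1
    have h2 := norm_pos_iff.2 hzw2
    positivity
  have hb' : 0 < ‖1 - (starRingEnd ℂ) w2 * w1‖ :=
    lt_of_le_of_lt (norm_nonneg _) (abs_sub_lt_abs_one_sub w1 w2 hw1 hw2)
  have hS : 0 < ‖cayley z w1 - (starRingEnd ℂ) (cayley z w2)‖ := by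
    nlinarith [habsB, hK, hb', norm_nonneg (cayley z w1 - (starRingEnd ℂ) (cayley z w2))]
  rw [norm_div, div_eq_div_iff (ne_of_gt hb') (ne_of_gt hS)]
  have h1 : ‖cayley z w1 - cayley z w2‖ *
      (‖z - w1‖ * ‖z - w2‖) *
      ‖cayley z w1 - (starRingEnd ℂ) (cayley z w2)‖ =
      2 * ‖w1 - w2‖ *
      ‖cayley z w1 - (starRingEnd ℂ) (cayley z w2)‖ := by rw [habsA]
  have h2 : ‖cayley z w1 - (starRingEnd ℂ) (cayley z w2)‖ *
      (‖z - w1‖ * ‖z - w2‖) *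
      ‖cayley z w1 - cayley z w2‖ =
      2 * ‖1 - (starRingEnd ℂ) w2 * w1‖ *
      ‖cayley z w1 - cayley z w2‖ := by rw [habsB]
  linear_combination (h2 - h1) / 2
lemma sq_eq_of {a b : ℝ} (ha : 0 ≤ a) (hb : 0 ≤ b) (h : a ^ 2 = b ^ 2) : a = b := by
  nlinarith

lemma exp_abs_add (x : ℝ) : Real.exp |x| + Real.exp (-|x|) = Real.exp x + Real.exp (-x) := by
  rcases abs_cases x with ⟨h, _⟩ | ⟨h, _⟩ <;> rw [h] <;> ring_nf

/-- Transfer the Poincaré distance identity to the half-plane picture. -/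
lemma dist_to_E {z w1 w2 : ℂ} (hz : ‖z‖ = 1)
    (hw1 : ‖w1‖ < 1) (hw2 : ‖w2‖ < 1) {d : ℝ} (hd : 0 ≤ d)
    (h : poincareDist w1 w2 = d) :
    ‖cayley z w1 - cayley z w2‖ ^ 2 =
      (cayley z w1).im * (cayley z w2).im * (Real.exp d + Real.exp (-d) - 2) := by
  set τ := ‖(w1 - w2) / (1 - (starRingEnd ℂ) w2 * w1)‖ with hτdef
  have hτ0 : 0 ≤ τ := norm_nonneg _
  have hτ1 : τ < 1 := tau_lt_one w1 w2 hw1 hw2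
  have hpos : 0 < (1 + τ) / (1 - τ) := by
    apply div_pos <;> linarith
  have hE1 : (1 + τ) / (1 - τ) = Real.exp d := by
    rw [← h, poincareDist, Real.exp_log hpos]
  set E := Real.exp d with hEdef
  have hEpos : 0 < E := Real.exp_pos d
  have hτE : τ * (E + 1) = E - 1 := by
    rw [div_eq_iff (by linarith : (1:ℝ) - τ ≠ 0)] at hE1
    nlinarith [hE1]
  set Q := ‖cayley z w1 - cayley z w2‖ with hQdef
  set S := ‖cayley z w1 - (starRingEnd ℂ) (cayley z w2)‖ with hSdef
  have hy1 := cayley_im_pos hz hw1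
  have hy2 := cayley_im_pos hz hw2
  set y1 := (cayley z w1).im
  set y2 := (cayley z w2).im
  have hsq : S ^ 2 = Q ^ 2 + 4 * y1 * y2 := by
    rw [hSdef, hQdef]
    rw [abs_sub_conj_sq]
  have hS : 0 < S := by nlinarith [norm_nonneg (cayley z w1 - (starRingEnd ℂ) (cayley z w2))]
  have hratio : τ = Q / S := cayley_ratio hz hw1 hw2
  have hQ : Q = τ * S := by rw [hratio]; field_simp
  have hQsq : Q ^ 2 = τ ^ 2 * S ^ 2 := by rw [hQ]; ring
  have h1 : Q ^ 2 * (1 - τ ^ 2) = 4 * τ ^ 2 * y1 * y2 := by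
    linear_combination hQsq + τ ^ 2 * hsq
  have hfin : Q ^ 2 * E = (E - 1) ^ 2 * (y1 * y2) := by
    linear_combination ((E + 1) ^ 2 / 4) * h1 + ((Q ^ 2 + 4 * y1 * y2) * (τ * (E + 1) + E - 1) / 4) * hτE
  rw [Real.exp_neg, ← hEdef]
  field_simp
  linear_combination hfin
section Ray

variable {P : ℝ → ℂ}

/-- The energy relation for a unit-speed ray, written with exponentials. -/
def RayRel (P : ℝ → ℂ) : Prop :=
  (∀ t, 0 ≤ t → 0 < (P t).im) ∧
  ∀ s, 0 ≤ s → ∀ t, 0 ≤ t → ‖P s - P t‖ ^ 2 =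
    (P s).im * (P t).im * (Real.exp (s - t) + Real.exp (t - s) - 2)

lemma RayRel.im_sq (hP : RayRel P) {s t : ℝ} (hs : 0 ≤ s) (ht : 0 ≤ t) :
    (P s).im ^ 2 + (P t).im ^ 2 ≤
      (P s).im * (P t).im * (Real.exp (s - t) + Real.exp (t - s)) := by
  have h := hP.2 s hs t ht
  have h2 : ((P s).im - (P t).im) ^ 2 ≤ ‖P s - P t‖ ^ 2 := by
    have h3 := Complex.abs_im_le_norm (P s - P t)
    rw [Complex.sub_im] at h3
    nlinarith [norm_nonneg (P s - P t), abs_nonneg ((P s).im - (P t).im),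
      le_abs_self ((P s).im - (P t).im), neg_abs_le ((P s).im - (P t).im)]
  nlinarith [h, h2]

lemma RayRel.im_ratio (hP : RayRel P) {s t : ℝ} (hs : 0 ≤ s) (ht : 0 ≤ t) :
    (P t).im ≤ (P s).im * Real.exp |t - s| := by
  have h := hP.im_sq hs ht
  have hsym : Real.exp (s - t) + Real.exp (t - s) = Real.exp |t - s| + Real.exp (-|t - s|) := by
    rw [exp_abs_add]; ring_nf
  rw [hsym] at h
  set a := |t - s|
  have hprod : Real.exp a * Real.exp (-a) = 1 := by rw [← Real.exp_add]; simp
  have ha : 0 ≤ a := abs_nonneg _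
  have hea : 1 ≤ Real.exp a := by
    calc (1:ℝ) ≤ 1 + a := by linarith
    _ ≤ Real.exp a := by linarith [Real.add_one_le_exp a]
  by_contra hc
  push_neg at hc
  have hys := hP.1 s hs
  have hyt := hP.1 t ht
  have h1 : 0 < (P t).im - (P s).im * Real.exp a := by linarith
  have h2 : 0 < (P t).im - (P s).im * Real.exp (-a) := by
    have : Real.exp (-a) ≤ Real.exp a := Real.exp_le_exp.2 (by linarith)
    nlinarith
  nlinarith [mul_pos h1 h2]

lemma RayRel.im_cont (hP : RayRel P) : ContinuousOn (fun t => (P t).im) (Ici 0) := by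
  intro s hs
  rw [Metric.continuousWithinAt_iff]
  intro ε hε
  simp only [mem_Ici] at hs
  have hys := hP.1 s hs
  refine ⟨min 1 (ε / (Real.exp 2 * (P s).im + 1)), ?_, ?_⟩
  · have : 0 < ε / (Real.exp 2 * (P s).im + 1) := by positivity
    exact lt_min one_pos this
  intro t ht hdist
  simp only [mem_Ici] at ht
  rw [Real.dist_eq] at hdist ⊢
  set a := |t - s| with hadef
  have ha : 0 ≤ a := abs_nonneg _
  have ha1 : a < 1 := lt_of_lt_of_le hdist (min_le_left _ _)
  have ha2 : a < ε / (Real.exp 2 * (P s).im + 1) := lt_of_lt_of_le hdist (min_le_right _ _)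
  have hprod : Real.exp a * Real.exp (-a) = 1 := by rw [← Real.exp_add]; simp
  have hup : (P t).im ≤ (P s).im * Real.exp a := hP.im_ratio hs ht
  have hdown : (P s).im ≤ (P t).im * Real.exp a := by
    have := hP.im_ratio ht hs
    rwa [abs_sub_comm] at this
  have hea0 : 1 ≤ Real.exp a := by
    calc (1:ℝ) ≤ 1 + a := by linarith
    _ ≤ Real.exp a := by linarith [Real.add_one_le_exp a]
  -- |yt - ys| ≤ ys * (exp a - 1) * exp a ≤ ys * exp 1 * a  (crude)
  have hkey : |(P t).im - (P s).im| ≤ (P s).im * (Real.exp a - 1) * Real.exp a := by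
    rw [abs_le]
    have he0 : (0:ℝ) ≤ Real.exp a - 1 := by linarith
    constructor
    · have hyt := hP.1 t ht
      nlinarith [hdown, mul_le_mul_of_nonneg_right hup he0, hyt]
    · nlinarith [hup, mul_nonneg (mul_nonneg hys.le he0) he0]
  have hlin : Real.exp a - 1 ≤ a * Real.exp a := by
    have := Real.add_one_le_exp (-a)
    nlinarith [Real.exp_pos a]
  have hbound : |(P t).im - (P s).im| ≤ (P s).im * Real.exp 2 * a := by
    have h1 : (P s).im * (Real.exp a - 1) * Real.exp a ≤ (P s).im * (a * Real.exp a) * Real.exp a := by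
      nlinarith [mul_le_mul_of_nonneg_right hlin (mul_nonneg hys.le (Real.exp_pos a).le)]
    have he1 : Real.exp a * Real.exp a ≤ Real.exp 2 := by
      rw [← Real.exp_add]
      exact Real.exp_le_exp.2 (by linarith)
    have h2 : (P s).im * (a * Real.exp a) * Real.exp a ≤ (P s).im * Real.exp 2 * a := by
      nlinarith [mul_le_mul_of_nonneg_left he1 (mul_nonneg hys.le ha)]
    linarith [hkey]
  calc |(P t).im - (P s).im| ≤ (P s).im * Real.exp 2 * a := hbound
  _ < ε := by
    have hden : 0 < Real.exp 2 * (P s).im + 1 := by positivity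
    nlinarith [(lt_div_iff₀ hden).1 ha2, hys, Real.exp_pos 2, ha]

lemma RayRel.midpoint (hP : RayRel P) {s t : ℝ} (hs : 0 ≤ s) (hst : s < t) :
    (P ((s + t) / 2)).im * ((P s).im + (P t).im) =
      (Real.exp ((t - s) / 2) + Real.exp (-((t - s) / 2))) * ((P s).im * (P t).im) := by
  set δ := (t - s) / 2 with hδdef
  set m := (s + t) / 2 with hmdef
  have hδ : 0 < δ := by rw [hδdef]; linarith
  have hm0 : 0 ≤ m := by rw [hmdef]; linarith
  have ht0 : 0 ≤ t := by linarith
  set eδ := Real.exp δ with heδdef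
  set enδ := Real.exp (-δ) with henδdef
  have hprod : eδ * enδ = 1 := by rw [heδdef, henδdef, ← Real.exp_add]; simp
  have heδ1 : 1 < eδ := by
    rw [heδdef]; calc (1:ℝ) < 1 + δ := by linarith
    _ ≤ Real.exp δ := by linarith [Real.add_one_le_exp δ]
  have henδ1 : enδ < 1 := by nlinarith
  have hsh : 0 < (eδ - enδ) / 2 := by linarith
  set yp := (P s).im with hypdef
  set yq := (P m).im with hyqdef
  set yr := (P t).im with hyrdef
  have hyp : 0 < yp := hP.1 s hs
  have hyq : 0 < yq := hP.1 m hm0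
  have hyr : 0 < yr := hP.1 t ht0
  -- the three chord equations
  have h1 : ‖P s - P m‖ ^ 2 = yp * yq * (enδ + eδ - 2) := by
    have h := hP.2 s hs m hm0
    rw [show s - m = -δ by rw [hmdef, hδdef]; ring, show m - s = δ by rw [hmdef, hδdef]; ring] at h
    exact h
  have h2 : ‖P m - P t‖ ^ 2 = yq * yr * (enδ + eδ - 2) := by
    have h := hP.2 m hm0 t ht0
    rw [show m - t = -δ by rw [hmdef, hδdef]; ring, show t - m = δ by rw [hmdef, hδdef]; ring] at h
    exact h
  have h3 : ‖P s - P t‖ ^ 2 = yp * yr * (eδ * eδ + enδ * enδ - 2) := by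
    have h := hP.2 s hs t ht0
    rw [show s - t = -δ + -δ by rw [hδdef]; ring, show t - s = δ + δ by rw [hδdef]; ring,
      Real.exp_add, Real.exp_add] at h
    rw [h, ← heδdef, ← henδdef]; ring
  -- Euclidean centers of the two hyperbolic circles
  set Cp : ℂ := ⟨(P s).re, yp * ((eδ + enδ) / 2)⟩ with hCpdef
  set Cr : ℂ := ⟨(P t).re, yr * ((eδ + enδ) / 2)⟩ with hCrdef
  have habs1 : ‖P m - Cp‖ ^ 2 = (yp * ((eδ - enδ) / 2)) ^ 2 := by
    rw [Complex.sq_norm, Complex.normSq_apply, Complex.sub_re, Complex.sub_im] at h1 ⊢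
    simp only [hCpdef]
    linear_combination h1 + yp ^ 2 * hprod
  have habs2 : ‖P m - Cr‖ ^ 2 = (yr * ((eδ - enδ) / 2)) ^ 2 := by
    rw [Complex.sq_norm, Complex.normSq_apply, Complex.sub_re, Complex.sub_im] at h2 ⊢
    simp only [hCrdef]
    linear_combination h2 + yr ^ 2 * hprod
  have habs3 : ‖Cp - Cr‖ ^ 2 = ((yp + yr) * ((eδ - enδ) / 2)) ^ 2 := by
    rw [Complex.sq_norm, Complex.normSq_apply, Complex.sub_re, Complex.sub_im] at h3 ⊢
    simp only [hCpdef, hCrdef]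
    linear_combination h3 + (yp ^ 2 + yr ^ 2) * hprod
  have hd1 : dist (P m) Cp = yp * ((eδ - enδ) / 2) := by
    rw [Complex.dist_eq]
    exact sq_eq_of (norm_nonneg _) (by positivity) habs1
  have hd2 : dist (P m) Cr = yr * ((eδ - enδ) / 2) := by
    rw [Complex.dist_eq]
    exact sq_eq_of (norm_nonneg _) (by positivity) habs2
  have hd3 : dist Cp Cr = (yp + yr) * ((eδ - enδ) / 2) := by
    rw [Complex.dist_eq]
    exact sq_eq_of (norm_nonneg _) (by positivity) habs3
  have htri : dist Cp (P m) + dist (P m) Cr = dist Cp Cr := by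
    rw [dist_comm Cp (P m), hd1, hd2, hd3]; ring
  have hseg : P m ∈ segment ℝ Cp Cr := (dist_add_dist_eq_iff.1 htri).mem_segment
  obtain ⟨θa, θb, hθa, hθb, hab, hq⟩ := hseg
  have hqc : P m - Cp = (θb : ℂ) * (Cr - Cp) := by
    rw [← hq, show θa = 1 - θb by linarith]
    simp only [Complex.real_smul]
    push_cast
    ring
  have hθ : θb * ((yp + yr) * ((eδ - enδ) / 2)) = yp * ((eδ - enδ) / 2) := by
    have h := congrArg (fun x : ℂ => ‖x‖) hqc
    rw [norm_mul, Complex.norm_real, Real.norm_eq_abs, abs_of_nonneg hθb, ← Complex.dist_eq, ← Complex.dist_eq,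
      dist_comm (P m) Cp, dist_comm Cr Cp, dist_comm Cp (P m)] at h
    rw [← hd1, h, hd3]
  have hθval : θb * (yp + yr) = yp := by
    have hne : ((eδ - enδ) / 2) ≠ 0 := ne_of_gt hsh
    exact mul_right_cancel₀ hne (by linear_combination hθ)
  have him : yq - yp * ((eδ + enδ) / 2) = θb * (yr * ((eδ + enδ) / 2) - yp * ((eδ + enδ) / 2)) := by
    have h := congrArg Complex.im hqc
    simpa [Complex.sub_im, Complex.mul_im, Complex.ofReal_re, Complex.ofReal_im] using h
  linear_combination (yp + yr) * him + ((eδ + enδ) / 2) * (yr - yp) * hθval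

end Ray
section FuncEq

variable {w : ℝ → ℝ}

lemma funceq_local (hcont : ContinuousOn w (Ici 0))
    (hmid : ∀ s t, 0 ≤ s → s < t →
      w ((s + t) / 2) * (Real.exp ((t - s) / 2) + Real.exp (-((t - s) / 2))) = w s + w t)
    {T : ℝ} (hT : 0 < T) {A B : ℝ} (h0 : A + B = w 0)
    (hTend : A * Real.exp T + B * Real.exp (-T) = w T) :
    ∀ t ∈ Icc (0:ℝ) T, w t = A * Real.exp t + B * Real.exp (-t) := by
  set g : ℝ → ℝ := fun u => w u - (A * Real.exp u + B * Real.exp (-u)) with hg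
  have hg0 : g 0 = 0 := by simp [hg]; linarith
  have hgT : g T = 0 := by simp [hg]; linarith
  have hgmid : ∀ s t, 0 ≤ s → s < t →
      g ((s + t) / 2) * (Real.exp ((t - s) / 2) + Real.exp (-((t - s) / 2))) = g s + g t := by
    intro s t hs hst
    have h1 := hmid s t hs hst
    have e1 : Real.exp ((s+t)/2) * Real.exp ((t-s)/2) = Real.exp t := by
      rw [← Real.exp_add]; congr 1; ring
    have e2 : Real.exp ((s+t)/2) * Real.exp (-((t-s)/2)) = Real.exp s := by
      rw [← Real.exp_add]; congr 1; ring
    have e3 : Real.exp (-((s+t)/2)) * Real.exp ((t-s)/2) = Real.exp (-s) := by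
      rw [← Real.exp_add]; congr 1; ring
    have e4 : Real.exp (-((s+t)/2)) * Real.exp (-((t-s)/2)) = Real.exp (-t) := by
      rw [← Real.exp_add]; congr 1; ring
    simp only [hg]
    linear_combination h1 - A * e1 - A * e2 - B * e3 - B * e4
  have hcg : ContinuousOn (fun u => |g u|) (Icc 0 T) := by
    apply ContinuousOn.abs
    apply ContinuousOn.sub
    · exact hcont.mono (Icc_subset_Ici_self)
    · exact ((continuous_const.mul Real.continuous_exp).add
        (continuous_const.mul (Real.continuous_exp.comp continuous_neg))).continuousOn
  obtain ⟨u0, hu0, hmax⟩ := isCompact_Icc.exists_isMaxOn (⟨0, by constructor <;> linarith⟩ :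
    (Icc (0:ℝ) T).Nonempty) hcg
  have hmax' : ∀ u ∈ Icc (0:ℝ) T, |g u| ≤ |g u0| := hmax
  rcases eq_or_lt_of_le (abs_nonneg (g u0)) with hM | hM
  · intro t ht
    have := hmax' t ht
    rw [← hM] at this
    have : g t = 0 := abs_nonpos_iff.1 this
    simp only [hg] at this
    linarith
  · exfalso
    have hgu0 : g u0 ≠ 0 := by
      intro h; rw [h] at hM; simp at hM
    have hu0T : u0 ≠ 0 ∧ u0 ≠ T := by
      constructor <;> intro h <;> rw [h] at hgu0 <;> [exact hgu0 hg0; exact hgu0 hgT]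
    obtain ⟨hu1, hu2⟩ := hu0T
    have h0u : 0 < u0 := lt_of_le_of_ne hu0.1 (Ne.symm hu1)
    have huT : u0 < T := lt_of_le_of_ne hu0.2 hu2
    set d := min u0 (T - u0) with hd
    have hdpos : 0 < d := lt_min h0u (by linarith)
    have hd1 : d ≤ u0 := min_le_left _ _
    have hd2 : d ≤ T - u0 := min_le_right _ _
    have hkey := hgmid (u0 - d) (u0 + d) (by linarith) (by linarith)
    rw [show (u0 - d + (u0 + d)) / 2 = u0 by ring, show (u0 + d - (u0 - d)) / 2 = d by ring] at hkey
    have hc2 : 2 < Real.exp d + Real.exp (-d) := by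
      have hprod : Real.exp d * Real.exp (-d) = 1 := by rw [← Real.exp_add]; simp
      have h1 : 1 < Real.exp d := by
        calc (1:ℝ) < 1 + d := by linarith
        _ ≤ Real.exp d := by linarith [Real.add_one_le_exp d]
      nlinarith
    have hb1 : |g (u0 - d)| ≤ |g u0| := hmax' _ ⟨by linarith, by linarith⟩
    have hb2 : |g (u0 + d)| ≤ |g u0| := hmax' _ ⟨by linarith, by linarith⟩
    have habs : |g u0| * (Real.exp d + Real.exp (-d)) ≤ 2 * |g u0| := by
      calc |g u0| * (Real.exp d + Real.exp (-d)) = |g u0 * (Real.exp d + Real.exp (-d))| := by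
            rw [abs_mul, abs_of_pos (by linarith : (0:ℝ) < Real.exp d + Real.exp (-d))]
      _ = |g (u0 - d) + g (u0 + d)| := by rw [hkey]
      _ ≤ |g (u0 - d)| + |g (u0 + d)| := abs_add_le _ _
      _ ≤ 2 * |g u0| := by linarith
    nlinarith

lemma funceq (hpos : ∀ t, 0 ≤ t → 0 < w t) (hcont : ContinuousOn w (Ici 0))
    (hmid : ∀ s t, 0 ≤ s → s < t →
      w ((s + t) / 2) * (Real.exp ((t - s) / 2) + Real.exp (-((t - s) / 2))) = w s + w t) :
    ∃ A B : ℝ, A + B = w 0 ∧ ∀ t, 0 ≤ t → w t = A * Real.exp t + B * Real.exp (-t) := by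
  have hexp : ∀ T : ℝ, 0 < T → Real.exp T - Real.exp (-T) ≠ 0 := by
    intro T hT
    have h1 : Real.exp (-T) < Real.exp T := Real.exp_lt_exp.2 (by linarith)
    linarith
  have hcoeff : ∀ T : ℝ, 0 < T → ∃ A B : ℝ, A + B = w 0 ∧
      A * Real.exp T + B * Real.exp (-T) = w T := by
    intro T hT
    refine ⟨(w T - w 0 * Real.exp (-T)) / (Real.exp T - Real.exp (-T)),
      w 0 - (w T - w 0 * Real.exp (-T)) / (Real.exp T - Real.exp (-T)), by ring, ?_⟩
    have hne : Real.exp T - Real.exp (-T) ≠ 0 := hexp T hT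
    field_simp
    ring
  obtain ⟨A, B, hAB, hend⟩ := hcoeff 1 one_pos
  refine ⟨A, B, hAB, ?_⟩
  intro t ht
  rcases le_or_gt t 1 with h | h
  · exact funceq_local hcont hmid one_pos hAB hend t ⟨ht, h⟩
  · obtain ⟨A', B', hAB', hend'⟩ := hcoeff t (by linarith)
    have hloc := funceq_local hcont hmid (by linarith : (0:ℝ) < t) hAB' hend'
    have h1 := hloc 1 ⟨by norm_num, h.le⟩
    have h1' := funceq_local hcont hmid one_pos hAB hend 1 ⟨by norm_num, le_refl 1⟩
    have heq0 : A' + B' = A + B := by rw [hAB', hAB]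
    have heq1 : A' * Real.exp 1 + B' * Real.exp (-1) = A * Real.exp 1 + B * Real.exp (-1) := by
      rw [← h1, h1']
    have hz : (A' - A) * (Real.exp 1 - Real.exp (-1)) = 0 := by
      linear_combination heq1 - Real.exp (-1) * heq0
    have hA : A' = A := by
      rcases mul_eq_zero.1 hz with h' | h'
      · linarith
      · exact absurd h' (hexp 1 one_pos)
    have hB : B' = B := by rw [hA] at heq0; linarith
    rw [hloc t ⟨by linarith, le_refl t⟩, hA, hB]

end FuncEq
section Vertical

variable {P : ℝ → ℂ}

lemma RayRel.vertical (hP : RayRel P)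
    (hlim : Tendsto (fun t => ‖P t‖) atTop atTop) :
    ∀ t, 0 ≤ t → (P t).re = (P 0).re ∧ (P t).im = (P 0).im * Real.exp t := by
  set y0 := (P 0).im with hy0def
  have hy0 : 0 < y0 := hP.1 0 le_rfl
  set w : ℝ → ℝ := fun t => y0 / (P t).im with hw
  have hwpos : ∀ t, 0 ≤ t → 0 < w t := fun t ht => div_pos hy0 (hP.1 t ht)
  have hwcont : ContinuousOn w (Ici 0) :=
    ContinuousOn.div continuousOn_const hP.im_cont (fun t ht => ne_of_gt (hP.1 t ht))
  have hwmid : ∀ s t, 0 ≤ s → s < t →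
      w ((s + t) / 2) * (Real.exp ((t - s) / 2) + Real.exp (-((t - s) / 2))) = w s + w t := by
    intro s t hs hst
    have hm := hP.midpoint hs hst
    have hys := hP.1 s hs
    have hyt := hP.1 t (by linarith)
    have hyq := hP.1 ((s + t) / 2) (by linarith)
    simp only [hw]
    rw [div_add_div _ _ (ne_of_gt hys) (ne_of_gt hyt), div_mul_eq_mul_div,
      div_eq_div_iff (ne_of_gt hyq) (by positivity)]
    linear_combination (-y0) * hm
  obtain ⟨A, B, hAB, hform⟩ := funceq hwpos hwcont hwmid
  have hw0 : w 0 = 1 := div_self (ne_of_gt hy0)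
  rw [hw0] at hAB
  have hA0 : 0 ≤ A := by
    by_contra hA
    push_neg at hA
    set t0 := |Real.log ((|B| + 1) / (-A))| + 1 with ht0def
    have ht0 : 0 ≤ t0 := by positivity
    have hargpos : 0 < (|B| + 1) / (-A) := div_pos (by positivity) (by linarith)
    have hlt : (|B| + 1) / (-A) < Real.exp t0 := by
      calc (|B| + 1) / (-A) = Real.exp (Real.log ((|B| + 1) / (-A))) := (Real.exp_log hargpos).symm
      _ < Real.exp t0 := by
        apply Real.exp_lt_exp.2
        have := le_abs_self (Real.log ((|B| + 1) / (-A)))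
        linarith
    have hneg : A * Real.exp t0 + B * Real.exp (-t0) < 0 := by
      have h1 : |B| + 1 < Real.exp t0 * (-A) := (div_lt_iff₀ (by linarith : (0:ℝ) < -A)).1 hlt
      have h2 : B * Real.exp (-t0) ≤ |B| := by
        have he : Real.exp (-t0) ≤ 1 := Real.exp_le_one_iff.2 (by linarith)
        nlinarith [le_abs_self B, abs_nonneg B, Real.exp_pos (-t0)]
      nlinarith [h1, h2]
    have hpos := hwpos t0 ht0
    rw [hform t0 ht0] at hpos
    linarith
  have hA : A = 0 := by
    rcases eq_or_lt_of_le hA0 with h | hApos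
    · exact h.symm
    exfalso
    set t1 := |Real.log (2 * |B| / A + 1)| with ht1def
    have ht1 : 0 ≤ t1 := abs_nonneg _
    have hexpt1 : 2 * |B| / A ≤ Real.exp t1 := by
      have h1 : 0 < 2 * |B| / A + 1 := by positivity
      calc 2 * |B| / A ≤ 2 * |B| / A + 1 := by linarith
      _ = Real.exp (Real.log (2 * |B| / A + 1)) := (Real.exp_log h1).symm
      _ ≤ Real.exp t1 := Real.exp_le_exp.2 (le_abs_self _)
    set C := max 1 (2 * y0 ^ 2 / A) with hCdef
    have hbound : ∀ t, t1 ≤ t → ‖P t‖ ≤ ‖P 0‖ + C := by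
      intro t ht
      have ht0' : 0 ≤ t := le_trans ht1 ht
      have hyt := hP.1 t ht0'
      have hwt : A * Real.exp t / 2 ≤ w t := by
        rw [hform t ht0']
        have hexpt : 2 * |B| / A ≤ Real.exp t :=
          le_trans hexpt1 (Real.exp_le_exp.2 ht)
        have h1 : 2 * |B| ≤ A * Real.exp t := by
          have := (div_le_iff₀ (by linarith : (0:ℝ) < A)).1 hexpt
          nlinarith
        have h2 : -|B| ≤ B * Real.exp (-t) := by
          have he : Real.exp (-t) ≤ 1 := Real.exp_le_one_iff.2 (by linarith)
          nlinarith [neg_abs_le B, abs_nonneg B, Real.exp_pos (-t)]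
        linarith
      have hprodw : w t * (P t).im = y0 := by
        simp only [hw]
        field_simp
      have hyt_le : (P t).im * (A * Real.exp t) ≤ 2 * y0 := by
        nlinarith [mul_le_mul_of_nonneg_right hwt hyt.le]
      have hsq : ‖P 0 - P t‖ ^ 2 ≤ 2 * y0 ^ 2 / A := by
        have h := hP.2 0 le_rfl t ht0'
        rw [show (0:ℝ) - t = -t by ring, sub_zero] at h
        have hfac : Real.exp (-t) + Real.exp t - 2 ≤ Real.exp t := by
          have he : Real.exp (-t) ≤ 1 := Real.exp_le_one_iff.2 (by linarith)
          linarith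
        have h1 : ‖P 0 - P t‖ ^ 2 ≤ y0 * (P t).im * Real.exp t := by
          rw [h, ← hy0def]
          nlinarith [mul_le_mul_of_nonneg_left hfac (mul_nonneg hy0.le hyt.le)]
        have h2 : y0 * (P t).im * Real.exp t ≤ 2 * y0 ^ 2 / A := by
          rw [le_div_iff₀ hApos]
          nlinarith [mul_le_mul_of_nonneg_left hyt_le hy0.le]
        linarith
      have habs : ‖P 0 - P t‖ ≤ C := by
        rcases le_or_gt (‖P 0 - P t‖) 1 with h | h
        · exact le_trans h (le_max_left _ _)
        · have h1 : ‖P 0 - P t‖ ≤ ‖P 0 - P t‖ ^ 2 := by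
            nlinarith
          exact le_trans (le_trans h1 hsq) (le_max_right _ _)
      calc ‖P t‖ = ‖P 0 - (P 0 - P t)‖ := by congr 1; ring
      _ ≤ ‖P 0‖ + ‖P 0 - P t‖ := by
          simpa using norm_sub_le (P 0) (P 0 - P t)
      _ ≤ ‖P 0‖ + C := by linarith
    have h1 := hlim.eventually_gt_atTop (‖P 0‖ + C)
    have h2 := eventually_ge_atTop t1
    obtain ⟨t, hta, htb⟩ := (h1.and h2).exists
    exact absurd (hbound t htb) (not_le.2 hta)
  have hB : B = 1 := by rw [hA] at hAB; linarith
  have hy : ∀ t, 0 ≤ t → (P t).im = y0 * Real.exp t := by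
    intro t ht
    have h := hform t ht
    rw [hA, hB] at h
    simp only [zero_mul, one_mul, zero_add] at h
    have hyt := hP.1 t ht
    have hpr : Real.exp t * Real.exp (-t) = 1 := by rw [← Real.exp_add]; simp
    simp only [hw] at h
    rw [div_eq_iff (ne_of_gt hyt)] at h
    linear_combination (-Real.exp t) * h - (P t).im * hpr
  intro t ht
  refine ⟨?_, hy t ht⟩
  have h := hP.2 0 le_rfl t ht
  rw [show (0:ℝ) - t = -t by ring, sub_zero] at h
  rw [Complex.sq_norm, Complex.normSq_apply, Complex.sub_re, Complex.sub_im] at h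
  rw [hy t ht] at h
  have hpr : Real.exp t * Real.exp (-t) = 1 := by rw [← Real.exp_add]; simp
  have hsq : ((P 0).re - (P t).re) * ((P 0).re - (P t).re) = 0 := by
    linear_combination h + y0 ^ 2 * hpr
  have := mul_self_eq_zero.1 hsq
  linarith

end Vertical
lemma normSq_lt_one {w : ℂ} (hw : ‖w‖ < 1) : Complex.normSq w < 1 := by
  have := Complex.sq_norm w
  nlinarith [norm_nonneg w]

set_option maxHeartbeats 1000000 in
theorem stmt_3' (γ σ : ℝ → ℂ)
    (hγmem : ∀ t : ℝ, 0 ≤ t → ‖γ t‖ < 1)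
    (hσmem : ∀ t : ℝ, 0 ≤ t → ‖σ t‖ < 1)
    (hγ : ∀ s : ℝ, 0 ≤ s → ∀ t : ℝ, 0 ≤ t → poincareDist (γ s) (γ t) = |s - t|)
    (hσ : ∀ s : ℝ, 0 ≤ s → ∀ t : ℝ, 0 ≤ t → poincareDist (σ s) (σ t) = |s - t|)
    (z : ℂ) (hz : ‖z‖ = 1)
    (hγlim : Filter.Tendsto γ Filter.atTop (nhds z))
    (hσlim : Filter.Tendsto σ Filter.atTop (nhds z))
    (hhoro : ‖z - γ 0‖ ^ 2 / (1 - ‖γ 0‖ ^ 2) =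
             ‖z - σ 0‖ ^ 2 / (1 - ‖σ 0‖ ^ 2)) :
    ∃ D : ℝ, 0 < D ∧ ∀ t : ℝ, 0 ≤ t →
      poincareDist (γ t) (σ t) ≤ D * Real.exp (-t) := by
  -- the ray relations for the transformed curves
  have mkRay : ∀ η : ℝ → ℂ, (∀ t : ℝ, 0 ≤ t → ‖η t‖ < 1) →
      (∀ s : ℝ, 0 ≤ s → ∀ t : ℝ, 0 ≤ t → poincareDist (η s) (η t) = |s - t|) →
      RayRel (fun t => cayley z (η t)) := by
    intro η hm hd
    constructor
    · exact fun t ht => cayley_im_pos hz (hm t ht)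
    · intro s hs t ht
      have h := dist_to_E hz (hm s hs) (hm t ht) (abs_nonneg (s - t)) (hd s hs t ht)
      rw [show Real.exp |s - t| + Real.exp (-|s - t|) - 2 =
        Real.exp (s - t) + Real.exp (t - s) - 2 by
          rw [exp_abs_add, show -(s - t) = t - s from by ring]] at h
      exact h
  have hRγ := mkRay γ hγmem hγ
  have hRσ := mkRay σ hσmem hσ
  -- the transformed curves escape to infinity
  have mkLim : ∀ η : ℝ → ℂ, (∀ t : ℝ, 0 ≤ t → ‖η t‖ < 1) →
      Filter.Tendsto η Filter.atTop (nhds z) →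
      Tendsto (fun t => ‖cayley z (η t)‖) atTop atTop := by
    intro η hm hl
    have hnum : Tendsto (fun t => ‖Complex.I * (z + η t)‖) atTop (nhds 2) := by
      have h1 : Tendsto (fun t => Complex.I * (z + η t)) atTop (nhds (Complex.I * (z + z))) :=
        tendsto_const_nhds.mul (tendsto_const_nhds.add hl)
      have h2 := (continuous_norm.tendsto (Complex.I * (z + z))).comp h1
      have hval : ‖Complex.I * (z + z)‖ = 2 := by
        rw [show Complex.I * (z + z) = 2 * Complex.I * z by ring, norm_mul, norm_mul,
          Complex.norm_two, Complex.norm_I, hz]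
        norm_num
      rw [hval] at h2
      exact h2
    have hden : Tendsto (fun t => ‖z - η t‖) atTop (nhdsWithin 0 (Set.Ioi 0)) := by
      rw [tendsto_nhdsWithin_iff]
      constructor
      · have h1 : Tendsto (fun t => z - η t) atTop (nhds (z - z)) := tendsto_const_nhds.sub hl
        rw [sub_self] at h1
        have h2 := (continuous_norm.tendsto 0).comp h1
        rw [norm_zero] at h2
        exact h2
      · filter_upwards [eventually_ge_atTop (0:ℝ)] with t ht
        exact norm_pos_iff.2 (sub_ne_zero.2 (z_ne_w hz (hm t ht)))
    have h3 := Filter.Tendsto.pos_mul_atTop (by norm_num : (0:ℝ) < 2) hnum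
      hden.inv_tendsto_nhdsGT_zero
    apply h3.congr
    intro t
    rw [Pi.inv_apply, cayley, norm_div, div_eq_mul_inv]
  have hVγ := hRγ.vertical (mkLim γ hγmem hγlim)
  have hVσ := hRσ.vertical (mkLim σ hσmem hσlim)
  -- equal initial heights from the horocycle hypothesis
  set y0 := (cayley z (γ 0)).im with hy0def
  have hy0pos : 0 < y0 := cayley_im_pos hz (hγmem 0 le_rfl)
  have hyσ0 : (cayley z (σ 0)).im = y0 := by
    rw [cayley_im hz (hσmem 0 le_rfl), hy0def, cayley_im hz (hγmem 0 le_rfl)]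
    rw [Complex.sq_norm, Complex.sq_norm, Complex.sq_norm, Complex.sq_norm] at hhoro
    have h1 : Complex.normSq (γ 0) < 1 := normSq_lt_one (hγmem 0 le_rfl)
    have h2 : Complex.normSq (σ 0) < 1 := normSq_lt_one (hσmem 0 le_rfl)
    have h3 : 0 < Complex.normSq (z - γ 0) :=
      Complex.normSq_pos.2 (sub_ne_zero.2 (z_ne_w hz (hγmem 0 le_rfl)))
    have h4 : 0 < Complex.normSq (z - σ 0) :=
      Complex.normSq_pos.2 (sub_ne_zero.2 (z_ne_w hz (hσmem 0 le_rfl)))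
    rw [div_eq_div_iff (by linarith : (1:ℝ) - Complex.normSq (γ 0) ≠ 0)
      (by linarith : (1:ℝ) - Complex.normSq (σ 0) ≠ 0)] at hhoro
    rw [div_eq_div_iff (ne_of_gt h4) (ne_of_gt h3)]
    linarith
  set a := (cayley z (γ 0)).re - (cayley z (σ 0)).re with hadef
  refine ⟨|a| / y0 + 1, by positivity, ?_⟩
  intro t ht
  obtain ⟨hreγ, himγ⟩ := hVγ t ht
  obtain ⟨hreσ, himσ⟩ := hVσ t ht
  rw [hyσ0] at himσ
  set R := 2 * (y0 * Real.exp t) with hRdef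
  have hRpos : 0 < R := by positivity
  have hdiff : cayley z (γ t) - cayley z (σ t) = (a : ℂ) := by
    apply Complex.ext
    · rw [Complex.sub_re, hreγ, hreσ, Complex.ofReal_re, hadef]
    · rw [Complex.sub_im, himγ, himσ, Complex.ofReal_im]
      ring
  have hconj : cayley z (γ t) - (starRingEnd ℂ) (cayley z (σ t)) = ⟨a, R⟩ := by
    apply Complex.ext
    · rw [Complex.sub_re, Complex.conj_re, hreγ, hreσ, hadef]
    · rw [Complex.sub_im, Complex.conj_im, himγ, himσ, sub_neg_eq_add, hRdef]
      ring
  set S := Real.sqrt (a ^ 2 + R ^ 2) with hSdef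
  have hS2 : S ^ 2 = a ^ 2 + R ^ 2 := Real.sq_sqrt (by positivity)
  have hSpos : 0 < S := Real.sqrt_pos.2 (by positivity)
  have haS : |a| < S := by nlinarith [abs_nonneg a, sq_abs a]
  have hτ : ‖(γ t - σ t) / (1 - (starRingEnd ℂ) (σ t) * γ t)‖ = |a| / S := by
    rw [cayley_ratio hz (hγmem t ht) (hσmem t ht), hdiff, hconj, Complex.norm_real, Real.norm_eq_abs]
    congr 1
    rw [Complex.norm_def, Complex.normSq_mk, hSdef]
    congr 1
    ring
  have h1τ : 0 < 1 - |a| / S := by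
    rw [sub_pos, div_lt_one hSpos]
    exact haS
  have h2τ : 0 < 1 + |a| / S := by positivity
  -- the quantitative bound
  set u := |a| / R with hu
  have hu0 : 0 ≤ u := by positivity
  have hQR : |a| = u * R := by rw [hu]; field_simp
  have hQR2 : |a| ^ 2 = (u * R) ^ 2 := by rw [hQR]
  have hprod : (S + u * R) * (S - u * R) = R ^ 2 := by
    linear_combination hS2 - sq_abs a + hQR2
  have hSuR : 0 < S - u * R := by rw [← hQR]; linarith
  have hSub : S + u * R ≤ R * (1 + u + u ^ 2 / 2) := by
    have hdiff2 : S ^ 2 + R ^ 2 * u ^ 4 / 4 = (R * (1 + u ^ 2 / 2)) ^ 2 := by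
      linear_combination hS2 - sq_abs a + hQR2
    have h1 : S ≤ R * (1 + u ^ 2 / 2) := by
      nlinarith [hdiff2, hSpos, mul_pos hRpos (by positivity : (0:ℝ) < 1 + u ^ 2 / 2),
        sq_nonneg (u * u * R)]
    nlinarith [hRpos, hu0]
  have hq := Real.quadratic_le_exp_of_nonneg hu0
  have hRle : R ≤ (1 + u + u ^ 2 / 2) * (S - u * R) := by
    have h2 : R * R ≤ R * ((1 + u + u ^ 2 / 2) * (S - u * R)) := by
      calc R * R = (S + u * R) * (S - u * R) := by rw [hprod]; ring
      _ ≤ (R * (1 + u + u ^ 2 / 2)) * (S - u * R) := by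
          exact mul_le_mul_of_nonneg_right hSub hSuR.le
      _ = R * ((1 + u + u ^ 2 / 2) * (S - u * R)) := by ring
    exact le_of_mul_le_mul_left h2 hRpos
  have hkey : (1 + |a| / S) / (1 - |a| / S) ≤ Real.exp (2 * u) := by
    have heq : (1 + |a| / S) / (1 - |a| / S) = (S + u * R) / (S - u * R) := by
      rw [div_eq_div_iff (ne_of_gt h1τ) (ne_of_gt hSuR), ← hQR]
      field_simp
    rw [heq, div_le_iff₀ hSuR, show (2:ℝ) * u = u + u from by ring, Real.exp_add]
    have h3 : Real.exp u * (S - u * R) ≥ R := by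
      calc Real.exp u * (S - u * R) ≥ (1 + u + u ^ 2 / 2) * (S - u * R) :=
            mul_le_mul_of_nonneg_right hq hSuR.le
      _ ≥ R := hRle
    calc S + u * R ≤ R * (1 + u + u ^ 2 / 2) := hSub
    _ ≤ R * Real.exp u := by nlinarith
    _ ≤ (Real.exp u * (S - u * R)) * Real.exp u := by
        nlinarith [Real.exp_pos u, h3]
    _ = Real.exp u * Real.exp u * (S - u * R) := by ring
  have hlog : poincareDist (γ t) (σ t) ≤ 2 * u := by
    rw [poincareDist, hτ]
    calc Real.log ((1 + |a| / S) / (1 - |a| / S)) ≤ Real.log (Real.exp (2 * u)) :=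
          Real.log_le_log (by positivity) hkey
    _ = 2 * u := Real.log_exp _
  have hfinal : 2 * u ≤ (|a| / y0 + 1) * Real.exp (-t) := by
    have h4 : 2 * u = |a| / y0 * Real.exp (-t) := by
      rw [hu, hRdef, Real.exp_neg]
      field_simp
    nlinarith [Real.exp_pos (-t), abs_nonneg a, hy0pos, h4,
      mul_pos (Real.exp_pos (-t)) hy0pos]
  linarith

/-- Two unit-speed Poincaré geodesic rays in the disc converging to the
same boundary point `z`, whose initial points lie on the same horocycle at `z`, approach
each other exponentially fast. -/
theorem stmt_3 (γ σ : ℝ → ℂ)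
    (hγmem : ∀ t : ℝ, 0 ≤ t → γ t ∈ unitDisc)
    (hσmem : ∀ t : ℝ, 0 ≤ t → σ t ∈ unitDisc)
    (hγ : ∀ s : ℝ, 0 ≤ s → ∀ t : ℝ, 0 ≤ t → poincareDist (γ s) (γ t) = |s - t|)
    (hσ : ∀ s : ℝ, 0 ≤ s → ∀ t : ℝ, 0 ≤ t → poincareDist (σ s) (σ t) = |s - t|)
    (z : ℂ) (hz : ‖z‖ = 1)
    (hγlim : Filter.Tendsto γ Filter.atTop (nhds z))
    (hσlim : Filter.Tendsto σ Filter.atTop (nhds z))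
    (hhoro : ‖z - γ 0‖ ^ 2 / (1 - ‖γ 0‖ ^ 2) =
             ‖z - σ 0‖ ^ 2 / (1 - ‖σ 0‖ ^ 2)) :
    ∃ D : ℝ, 0 < D ∧ ∀ t : ℝ, 0 ≤ t →
      poincareDist (γ t) (σ t) ≤ D * Real.exp (-t) := by
  exact stmt_3' γ σ (fun t ht => hγmem t ht) (fun t ht => hσmem t ht) hγ hσ z hz hγlim hσlim hhoro

end
end

section
/- Let Ω ⊂ ℂ^n be a bounded C³ strongly convex domain, let α : [0, t₀] → Ω satisfy d^K_Ω(α(s), α(t)) = |s − t| for all s, t ∈ [0, t₀], and set p = α(0), q = α(t₀). Let φ : Δ → Ω be a complex geodesic whose image contains p and q, let π : Ω → φ(Δ) be a holomorphic retraction onto φ(Δ) (i.e. π holomorphic with π(Ω) ⊂ φ(Δ) and π(z) = z for z ∈ φ(Δ)), and let γ : [0, t₀] → φ(Δ) be the real geodesic in φ(Δ) from p to q (the isometric map with γ(0) = p, γ(t₀) = q whose image lies in φ(Δ)). Then π ∘ α = γ. -/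
open Set Filter Metric Bornology

noncomputable section

variable {E : Type*} [NormedAddCommGroup E] [NormedSpace ℂ E]

/-- pseudo-hyperbolic distance -/
def md (z w : ℂ) : ℝ := ‖(z - w) / (1 - (starRingEnd ℂ) w * z)‖

lemma poincareDist_eq (z w : ℂ) : poincareDist z w = Real.log ((1 + md z w) / (1 - md z w)) := rfl

lemma md_nonneg (z w : ℂ) : 0 ≤ md z w := norm_nonneg _

lemma md_def (z w : ℂ) :
    md z w = ‖z - w‖ / ‖1 - (starRingEnd ℂ) w * z‖ := by
  simp [md, map_div₀]

lemma md_symm (z w : ℂ) : md z w = md w z := by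
  rw [md_def, md_def]
  have h1 : ‖z - w‖ = ‖w - z‖ := by
    rw [← norm_neg]; ring_nf
  have h2 : (1 - (starRingEnd ℂ) z * w) = (starRingEnd ℂ) (1 - (starRingEnd ℂ) w * z) := by
    simp [map_sub, map_mul, Complex.conj_conj]; ring
  rw [h1, h2, Complex.norm_conj]

lemma key_normSq (z w : ℂ) :
    Complex.normSq (1 - (starRingEnd ℂ) w * z) - Complex.normSq (z - w)
      = (1 - Complex.normSq z) * (1 - Complex.normSq w) := by
  have h : ((1 - (starRingEnd ℂ) w * z) * (starRingEnd ℂ) (1 - (starRingEnd ℂ) w * z)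
      - (z - w) * (starRingEnd ℂ) (z - w) : ℂ)
      = (1 - z * (starRingEnd ℂ) z) * (1 - w * (starRingEnd ℂ) w) := by
    simp only [map_sub, map_mul, map_one, Complex.conj_conj]; ring
  rw [Complex.mul_conj, Complex.mul_conj, Complex.mul_conj, Complex.mul_conj] at h
  exact_mod_cast h

lemma normSq_lt_one_s16 {z : ℂ} (hz : z ∈ unitDisc) : Complex.normSq z < 1 := by
  have : ‖z‖ < 1 := hz
  nlinarith [Complex.sq_norm z, norm_nonneg z]

lemma one_sub_conj_ne {z w : ℂ} (hz : z ∈ unitDisc) (hw : w ∈ unitDisc) :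
    1 - (starRingEnd ℂ) w * z ≠ 0 := by
  have h := key_normSq z w
  have hz' := normSq_lt_one_s16 hz
  have hw' := normSq_lt_one_s16 hw
  have : 0 < Complex.normSq (1 - (starRingEnd ℂ) w * z) := by
    nlinarith [Complex.normSq_nonneg (z - w)]
  exact fun h0 => by simp [h0] at this

lemma normSq_sub_lt {z w : ℂ} (hz : z ∈ unitDisc) (hw : w ∈ unitDisc) :
    Complex.normSq (z - w) < Complex.normSq (1 - (starRingEnd ℂ) w * z) := by
  have h := key_normSq z w
  nlinarith [normSq_lt_one_s16 hz, normSq_lt_one_s16 hw]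

lemma md_lt_one {z w : ℂ} (hz : z ∈ unitDisc) (hw : w ∈ unitDisc) : md z w < 1 := by
  rw [md_def, div_lt_one]
  · rw [Complex.norm_def, Complex.norm_def]
    exact Real.sqrt_lt_sqrt (Complex.normSq_nonneg _) (normSq_sub_lt hz hw)
  · exact norm_pos_iff.mpr (one_sub_conj_ne hz hw)

lemma poincareDist_nonneg (z w : ℂ) : 0 ≤ poincareDist z w := by
  rw [poincareDist_eq]
  set t := md z w with ht
  have h0 : 0 ≤ t := md_nonneg z w
  rcases lt_trichotomy t 1 with h | h | h
  · apply Real.log_nonneg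
    rw [le_div_iff₀ (by linarith)]; linarith
  · simp [h]
  · have : (1 + t) / (1 - t) = -((1 + t) / (t - 1)) := by
      rw [show (1:ℝ) - t = -(t - 1) by ring, div_neg]
    rw [this, Real.log_neg_eq_log]
    apply Real.log_nonneg
    rw [le_div_iff₀ (by linarith)]; linarith

lemma L_inj {s1 s2 : ℝ} (h10 : 0 ≤ s1) (h11 : s1 < 1) (h20 : 0 ≤ s2) (h21 : s2 < 1)
    (h : Real.log ((1 + s1) / (1 - s1)) = Real.log ((1 + s2) / (1 - s2))) : s1 = s2 := by
  have p1 : (0:ℝ) < (1 + s1) / (1 - s1) := div_pos (by linarith) (by linarith)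
  have p2 : (0:ℝ) < (1 + s2) / (1 - s2) := div_pos (by linarith) (by linarith)
  have e := congrArg Real.exp h
  rw [Real.exp_log p1, Real.exp_log p2, div_eq_div_iff (by linarith) (by linarith)] at e
  linear_combination e / 2

lemma L_pos_ne {s : ℝ} (h0 : 0 ≤ s) (h1 : s < 1) (h : Real.log ((1 + s) / (1 - s)) ≠ 0) :
    0 < s := by
  rcases h0.lt_or_eq with h' | h'
  · exact h'
  · exfalso; apply h; rw [← h']; norm_num

lemma L_add {τ σ r : ℝ} (hτ0 : 0 ≤ τ) (hτ1 : τ < 1) (hσ0 : 0 ≤ σ) (hσ1 : σ < 1)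
    (hr0 : 0 ≤ r) (hr1 : r < 1)
    (h : Real.log ((1 + τ) / (1 - τ)) + Real.log ((1 + σ) / (1 - σ))
        = Real.log ((1 + r) / (1 - r))) : τ + σ = r * (1 + τ * σ) := by
  have pτ : (0:ℝ) < (1 + τ) / (1 - τ) := div_pos (by linarith) (by linarith)
  have pσ : (0:ℝ) < (1 + σ) / (1 - σ) := div_pos (by linarith) (by linarith)
  have pr : (0:ℝ) < (1 + r) / (1 - r) := div_pos (by linarith) (by linarith)
  have e := congrArg Real.exp h
  rw [Real.exp_add, Real.exp_log pτ, Real.exp_log pσ, Real.exp_log pr,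
    div_mul_div_comm, div_eq_div_iff (by nlinarith) (by linarith)] at e
  nlinarith [e]

lemma core {r τ σ : ℝ} (hr0 : 0 < r) (hr1 : r < 1) (hτ0 : 0 ≤ τ) (hτ1 : τ < 1)
    (hσ0 : 0 ≤ σ) (hσ1 : σ < 1) (hsum : τ + σ = r * (1 + τ * σ))
    (Z : ℂ) (hZτ : ‖Z‖ = τ) (hZσ : md Z (r : ℂ) = σ) : Z = (τ : ℂ) := by
  have hden : ‖1 - (starRingEnd ℂ) (r:ℂ) * Z‖ > 0 := by
    apply norm_pos_iff.mpr
    intro h0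
    have : (starRingEnd ℂ) (r:ℂ) * Z = 1 := by
      have := sub_eq_zero.mp h0; exact this.symm
    have habs := congrArg (‖·‖) this
    rw [norm_mul, Complex.norm_conj, Complex.norm_real, Real.norm_eq_abs, norm_one, hZτ] at habs
    have : |r| < 1 := by rw [abs_of_pos hr0]; exact hr1
    nlinarith [abs_nonneg r]
  have hE : ‖Z - (r:ℂ)‖ = σ * ‖1 - (starRingEnd ℂ) (r:ℂ) * Z‖ := by
    rw [md_def] at hZσ
    rw [← hZσ, div_mul_cancel₀]
    exact hden.ne'
  -- square it, in normSq form
  have hE2 : Complex.normSq (Z - (r:ℂ)) = σ^2 * Complex.normSq (1 - (starRingEnd ℂ) (r:ℂ) * Z) := by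
    have := congrArg (fun x => x^2) hE
    simpa [mul_pow, Complex.sq_norm] using this
  have hZ2 : Z.re^2 + Z.im^2 = τ^2 := by
    have := congrArg (fun x => x^2) hZτ
    simp only [Complex.sq_norm, Complex.normSq_apply] at this
    linarith [this]
  have E3 : r - τ = σ * (1 - r * τ) := by linear_combination (-1 : ℝ) * hsum
  have hrτ : 1 - r * τ > 0 := by nlinarith
  -- expand normSq
  have hre : ((starRingEnd ℂ) (r:ℂ) * Z).re = r * Z.re := by
    simp [Complex.conj_ofReal]
  have E1 : (Z.re - r)^2 + Z.im^2
      = σ^2 * ((1 - r * Z.re)^2 + (r * Z.im)^2) := by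
    have l : Complex.normSq (Z - (r:ℂ)) = (Z.re - r)^2 + Z.im^2 := by
      simp [Complex.normSq_apply]; ring
    have rr : Complex.normSq (1 - (starRingEnd ℂ) (r:ℂ) * Z)
        = (1 - r * Z.re)^2 + (r * Z.im)^2 := by
      simp [Complex.normSq_apply, Complex.conj_ofReal]; ring
    rw [l, rr] at hE2; exact hE2
  have hA : 2 * r * (1 - σ^2) * Z.re = τ^2 + r^2 - σ^2 - σ^2 * r^2 * τ^2 := by
    linear_combination (-1 : ℝ) * E1 + (1 - σ^2*r^2) * hZ2
  have hAτ : 2 * r * (1 - σ^2) * τ = τ^2 + r^2 - σ^2 - σ^2 * r^2 * τ^2 := by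
    linear_combination (-(σ*(1-r*τ) + r - τ)) * E3
  have hσ2 : σ^2 < 1 := by nlinarith
  have hcoef : 2 * r * (1 - σ^2) > 0 := by nlinarith
  have hx : Z.re = τ := by
    have h := hA.trans hAτ.symm
    have := mul_left_cancel₀ (ne_of_gt hcoef) h
    exact this
  have hy : Z.im = 0 := by nlinarith [hZ2, hx]
  apply Complex.ext
  · simpa using hx
  · simpa using hy

/-- Möbius transform sending `a` to `0`. -/
def mob (a w : ℂ) : ℂ := (w - a) / (1 - (starRingEnd ℂ) a * w)

lemma conj_cden_ne {a v : ℂ} (ha : a ∈ unitDisc) (hv : v ∈ unitDisc) :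
    1 - a * (starRingEnd ℂ) v ≠ 0 := by
  intro h
  apply one_sub_conj_ne hv ha
  have := congrArg (starRingEnd ℂ) h
  simpa [map_sub, map_mul, Complex.conj_conj] using this

lemma mob_I1 {a w v : ℂ} (ha : a ∈ unitDisc) (hw : w ∈ unitDisc) (hv : v ∈ unitDisc) :
    (mob a w - mob a v) * ((1 - (starRingEnd ℂ) a * w) * (1 - (starRingEnd ℂ) a * v))
      = (w - v) * (1 - (starRingEnd ℂ) a * a) := by
  unfold mob
  rw [div_sub_div _ _ (one_sub_conj_ne hw ha) (one_sub_conj_ne hv ha), div_mul_eq_mul_div,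
    div_eq_iff (mul_ne_zero (one_sub_conj_ne hw ha) (one_sub_conj_ne hv ha))]
  ring

lemma mob_I2 {a w v : ℂ} (ha : a ∈ unitDisc) (hw : w ∈ unitDisc) (hv : v ∈ unitDisc) :
    (1 - (starRingEnd ℂ) (mob a v) * mob a w)
      * ((1 - a * (starRingEnd ℂ) v) * (1 - (starRingEnd ℂ) a * w))
      = (1 - (starRingEnd ℂ) v * w) * (1 - (starRingEnd ℂ) a * a) := by
  unfold mob
  simp only [map_div₀, map_sub, map_mul, map_one, Complex.conj_conj]
  rw [div_mul_div_comm, one_sub_div (mul_ne_zero (conj_cden_ne ha hv) (one_sub_conj_ne hw ha)),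
    div_mul_eq_mul_div, div_eq_iff (mul_ne_zero (conj_cden_ne ha hv) (one_sub_conj_ne hw ha))]
  ring

lemma mob_den_ne {a w v : ℂ} (ha : a ∈ unitDisc) (hw : w ∈ unitDisc) (hv : v ∈ unitDisc) :
    1 - (starRingEnd ℂ) (mob a v) * mob a w ≠ 0 := by
  intro h0
  have h := mob_I2 ha hw hv
  rw [h0, zero_mul] at h
  exact mul_ne_zero (one_sub_conj_ne hw hv) (one_sub_conj_ne ha ha) h.symm

lemma mob_md {a w v : ℂ} (ha : a ∈ unitDisc) (hw : w ∈ unitDisc) (hv : v ∈ unitDisc) :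
    md (mob a w) (mob a v) = md w v := by
  have h1 := congrArg (‖·‖) (mob_I1 ha hw hv)
  have h2 := congrArg (‖·‖) (mob_I2 ha hw hv)
  simp only [norm_mul] at h1 h2
  rw [md_def, md_def]
  have d1 : ‖1 - (starRingEnd ℂ) a * w‖ > 0 :=
    norm_pos_iff.mpr (one_sub_conj_ne hw ha)
  have d2 : ‖1 - (starRingEnd ℂ) a * v‖ > 0 :=
    norm_pos_iff.mpr (one_sub_conj_ne hv ha)
  have d2' : ‖1 - a * (starRingEnd ℂ) v‖ = ‖1 - (starRingEnd ℂ) a * v‖ := by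
    rw [show (1 - a * (starRingEnd ℂ) v) = (starRingEnd ℂ) (1 - (starRingEnd ℂ) a * v) by
      simp [map_sub, map_mul, Complex.conj_conj], Complex.norm_conj]
  have d3 : ‖1 - (starRingEnd ℂ) v * w‖ > 0 :=
    norm_pos_iff.mpr (one_sub_conj_ne hw hv)
  have d4 : ‖1 - (starRingEnd ℂ) a * a‖ > 0 :=
    norm_pos_iff.mpr (one_sub_conj_ne ha ha)
  have d5 : ‖1 - (starRingEnd ℂ) (mob a v) * mob a w‖ > 0 :=
    norm_pos_iff.mpr (mob_den_ne ha hw hv)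
  rw [d2'] at h2
  rw [div_eq_div_iff d5.ne' d3.ne']
  have key : ‖mob a w - mob a v‖ * ‖1 - (starRingEnd ℂ) v * w‖
        * ((‖1 - (starRingEnd ℂ) a * w‖ * ‖1 - (starRingEnd ℂ) a * v‖)
          * ‖1 - (starRingEnd ℂ) a * a‖)
      = ‖w - v‖ * ‖1 - (starRingEnd ℂ) (mob a v) * mob a w‖
        * ((‖1 - (starRingEnd ℂ) a * w‖ * ‖1 - (starRingEnd ℂ) a * v‖)
          * ‖1 - (starRingEnd ℂ) a * a‖) := by
    linear_combination (‖1 - (starRingEnd ℂ) v * w‖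
        * ‖1 - (starRingEnd ℂ) a * a‖) * h1
      - (‖w - v‖ * ‖1 - (starRingEnd ℂ) a * a‖) * h2
  exact mul_right_cancel₀ (by positivity) key

lemma mob_inj {a w v : ℂ} (ha : a ∈ unitDisc) (hw : w ∈ unitDisc) (hv : v ∈ unitDisc)
    (h : mob a w = mob a v) : w = v := by
  have h1 := mob_I1 ha hw hv
  rw [h, sub_self, zero_mul] at h1
  rcases mul_eq_zero.mp h1.symm with h' | h'
  · exact sub_eq_zero.mp h'
  · exact absurd h' (one_sub_conj_ne ha ha)

lemma mob_self (a : ℂ) : mob a a = 0 := by simp [mob]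

lemma mob_abs {a w : ℂ} (ha : a ∈ unitDisc) (hw : w ∈ unitDisc) :
    ‖mob a w‖ = md w a := by
  have h := mob_md ha hw ha
  rw [mob_self] at h
  rw [← h, md_def]
  simp

lemma disc_uniq {a b z z' : ℂ} (ha : a ∈ unitDisc) (hb : b ∈ unitDisc)
    (hz : z ∈ unitDisc) (hz' : z' ∈ unitDisc)
    (hab : poincareDist a b ≠ 0)
    (h1 : poincareDist a z = poincareDist a z')
    (h2 : poincareDist z b = poincareDist z' b)
    (h3 : poincareDist a z + poincareDist z b = poincareDist a b) : z = z' := by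
  -- set up pseudo-hyperbolic quantities
  set τ := md z a with hτdef
  set σ := md z b with hσdef
  set r := md b a with hrdef
  have hτ0 : 0 ≤ τ := md_nonneg _ _
  have hτ1 : τ < 1 := md_lt_one hz ha
  have hσ0 : 0 ≤ σ := md_nonneg _ _
  have hσ1 : σ < 1 := md_lt_one hz hb
  have hr0 : 0 ≤ r := md_nonneg _ _
  have hr1 : r < 1 := md_lt_one hb ha
  -- translate pd to L of md, with symmetries
  have paz : poincareDist a z = Real.log ((1 + τ) / (1 - τ)) := by
    rw [poincareDist_eq, md_symm a z]
  have pab : poincareDist a b = Real.log ((1 + r) / (1 - r)) := by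
    rw [poincareDist_eq, md_symm a b]
  have pzb : poincareDist z b = Real.log ((1 + σ) / (1 - σ)) := by
    rw [poincareDist_eq]
  have hrpos : 0 < r := by
    apply L_pos_ne hr0 hr1
    rw [← pab]; exact hab
  have hsum : τ + σ = r * (1 + τ * σ) := by
    apply L_add hτ0 hτ1 hσ0 hσ1 hr0 hr1
    rw [← paz, ← pzb, ← pab]; exact h3
  -- same quantities for z'
  have hτ'1 : md z' a < 1 := md_lt_one hz' ha
  have hσ'1 : md z' b < 1 := md_lt_one hz' hb
  have hττ' : md z' a = τ := by
    apply L_inj (md_nonneg _ _) hτ'1 hτ0 hτ1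
    rw [← poincareDist_eq]
    rw [show Real.log ((1 + τ)/(1 - τ)) = poincareDist a z from paz.symm]
    rw [poincareDist_eq, md_symm z' a, ← poincareDist_eq]
    exact h1.symm
  have hσσ' : md z' b = σ := by
    apply L_inj (md_nonneg _ _) hσ'1 hσ0 hσ1
    rw [← poincareDist_eq, ← poincareDist_eq]
    exact h2.symm
  -- normalize: rotate so that mob a b goes to the positive real r
  have hMb_ne : mob a b ≠ 0 := by
    intro h0
    have h := mob_abs ha hb
    rw [h0, norm_zero] at h
    exact hrpos.ne' (hrdef.trans h.symm)
  set u : ℂ := (‖mob a b‖ : ℂ) / mob a b with hudef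
  have hu_ne : u ≠ 0 := by
    apply div_ne_zero _ hMb_ne
    simpa using hMb_ne
  have huu : (starRingEnd ℂ) u * u = 1 := by
    rw [hudef, map_div₀, Complex.conj_ofReal, div_mul_div_comm, ← Complex.normSq_eq_conj_mul_self]
    rw [show ((‖mob a b‖ : ℂ) * (‖mob a b‖ : ℂ))
        = ((Complex.normSq (mob a b) : ℂ)) by
      push_cast [← Complex.sq_norm]; ring]
    apply div_self
    simpa [Complex.normSq_eq_zero] using hMb_ne
  have habs_u : ‖u‖ = 1 := by
    have := congrArg (‖·‖) huu
    rw [norm_mul, Complex.norm_conj, norm_one] at this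
    nlinarith [norm_nonneg u]
  -- rotation invariance of md
  have rot_md : ∀ x y : ℂ, md (u * x) (u * y) = md x y := by
    intro x y
    rw [md_def, md_def]
    have e1 : u * x - u * y = u * (x - y) := by ring
    have e2 : 1 - (starRingEnd ℂ) (u * y) * (u * x) = 1 - (starRingEnd ℂ) y * x := by
      rw [map_mul]
      calc 1 - (starRingEnd ℂ) u * (starRingEnd ℂ) y * (u * x)
          = 1 - ((starRingEnd ℂ) u * u) * ((starRingEnd ℂ) y * x) := by ring
        _ = 1 - (starRingEnd ℂ) y * x := by rw [huu, one_mul]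
    rw [e1, e2, norm_mul, habs_u, one_mul]
  set F : ℂ → ℂ := fun w => u * mob a w with hFdef
  have hFmd : ∀ {w v : ℂ}, w ∈ unitDisc → v ∈ unitDisc → md (F w) (F v) = md w v := by
    intro w v hw hv
    rw [hFdef]
    simp only
    rw [rot_md, mob_md ha hw hv]
  have hFb : F b = (r : ℂ) := by
    rw [hFdef]
    simp only
    rw [hudef, div_mul_cancel₀ _ hMb_ne, mob_abs ha hb]
  have hFabs : ∀ {w : ℂ}, w ∈ unitDisc → ‖F w‖ = md w a := by
    intro w hw
    rw [hFdef]
    simp only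
    rw [norm_mul, habs_u, one_mul, mob_abs ha hw]
  -- apply core to F z and F z'
  have hz_core : F z = (τ : ℂ) := by
    apply core hrpos hr1 hτ0 hτ1 hσ0 hσ1 hsum
    · exact hFabs hz
    · rw [← hFb]; exact hFmd hz hb
  have hz'_core : F z' = (τ : ℂ) := by
    apply core hrpos hr1 hτ0 hτ1 hσ0 hσ1 hsum
    · rw [hFabs hz', hττ']
    · rw [← hFb, hFmd hz' hb, hσσ']
  have : mob a z = mob a z' := by
    have h := hz_core.trans hz'_core.symm
    rw [hFdef] at h
    simp only at h
    exact mul_left_cancel₀ hu_ne h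
  exact mob_inj ha hz hz' this

/-- The set of chain-lengths. -/
def chainSet (D : Set E) (p q : E) : Set ℝ :=
  {s : ℝ | ∃ (m : ℕ) (φ : Fin (m + 1) → ℂ → E) (a b : Fin (m + 1) → ℂ),
    IsHolChain D p q m φ a b ∧ s = ∑ i, poincareDist (a i) (b i)}

lemma kobayashiDist_eq (D : Set E) (p q : E) : kobayashiDist D p q = sInf (chainSet D p q) := rfl

lemma chainSet_nonneg {D : Set E} {p q : E} {s : ℝ} (hs : s ∈ chainSet D p q) : 0 ≤ s := by
  obtain ⟨m, φ, a, b, _, rfl⟩ := hs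
  exact Finset.sum_nonneg fun i _ => poincareDist_nonneg _ _

lemma chainSet_bddBelow (D : Set E) (p q : E) : BddBelow (chainSet D p q) :=
  ⟨0, fun s hs => chainSet_nonneg hs⟩

lemma chainSet_nonempty_of_ne {D : Set E} {p q : E} (h : kobayashiDist D p q ≠ 0) :
    (chainSet D p q).Nonempty := by
  by_contra hne
  rw [Set.not_nonempty_iff_eq_empty] at hne
  rw [kobayashiDist_eq, hne, Real.sInf_empty] at h
  exact h rfl

lemma chainSet_map {D : Set E} {p q : E} (f : E → E) (hf : DifferentiableOn ℂ f D)
    (hmaps : Set.MapsTo f D D) {s : ℝ} (hs : s ∈ chainSet D p q) :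
    s ∈ chainSet D (f p) (f q) := by
  obtain ⟨m, φ, a, b, ⟨hprop, h0, hlast, hmatch⟩, rfl⟩ := hs
  refine ⟨m, fun i => f ∘ φ i, a, b, ⟨fun i => ?_, ?_, ?_, fun i => ?_⟩, rfl⟩
  · obtain ⟨hd, hm, ha, hb⟩ := hprop i
    exact ⟨hf.comp hd hm, hmaps.comp hm, ha, hb⟩
  · simp only [Function.comp_apply, h0]
  · simp only [Function.comp_apply, hlast]
  · simp only [Function.comp_apply, hmatch i]

lemma kobayashiDist_contract {D : Set E} {p q : E} (f : E → E) (hf : DifferentiableOn ℂ f D)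
    (hmaps : Set.MapsTo f D D) (hne : (chainSet D p q).Nonempty) :
    kobayashiDist D (f p) (f q) ≤ kobayashiDist D p q :=
  csInf_le_csInf (chainSet_bddBelow D _ _) hne (fun s hs => chainSet_map f hf hmaps hs)

lemma sum_range_split (f : ℕ → ℝ) (A B : ℕ) :
    ∑ j ∈ Finset.range (A + B), f j
      = ∑ j ∈ Finset.range A, f j + ∑ j ∈ Finset.range B, f (A + j) := by
  induction B with
  | zero => simp
  | succ B ih => rw [← Nat.add_assoc, Finset.sum_range_succ, ih, Finset.sum_range_succ]; ring

lemma chain_concat {D : Set E} {p r q : E} {m m' : ℕ}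
    {φ : Fin (m+1) → ℂ → E} {a b : Fin (m+1) → ℂ}
    {φ' : Fin (m'+1) → ℂ → E} {a' b' : Fin (m'+1) → ℂ}
    (h : IsHolChain D p r m φ a b) (h' : IsHolChain D r q m' φ' a' b') :
    (∑ i, poincareDist (a i) (b i)) + (∑ i, poincareDist (a' i) (b' i))
      ∈ chainSet D p q := by
  obtain ⟨hprop, h0, hlast, hmatch⟩ := h
  obtain ⟨hprop', h0', hlast', hmatch'⟩ := h'
  set ψn : ℕ → ℂ → E := fun j =>
    if hj : j < m + 1 then φ ⟨j, hj⟩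
    else if hj' : j - (m+1) < m' + 1 then φ' ⟨j - (m+1), hj'⟩ else 0 with hψn
  set An : ℕ → ℂ := fun j =>
    if hj : j < m + 1 then a ⟨j, hj⟩
    else if hj' : j - (m+1) < m' + 1 then a' ⟨j - (m+1), hj'⟩ else 0 with hAn
  set Bn : ℕ → ℂ := fun j =>
    if hj : j < m + 1 then b ⟨j, hj⟩
    else if hj' : j - (m+1) < m' + 1 then b' ⟨j - (m+1), hj'⟩ else 0 with hBn
  refine ⟨m + m' + 1, fun i => ψn i.val, fun i => An i.val, fun i => Bn i.val,
    ⟨?_, ?_, ?_, ?_⟩, ?_⟩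
  · -- properties
    intro i
    by_cases hi : (i : ℕ) < m + 1
    · simp only [hψn, hAn, hBn, dif_pos hi]
      exact hprop _
    · have hi' : (i : ℕ) - (m+1) < m' + 1 := by have := i.isLt; omega
      simp only [hψn, hAn, hBn, dif_neg hi, dif_pos hi']
      exact hprop' _
  · -- start
    have h0v : ((0 : Fin (m + m' + 1 + 1)) : ℕ) = 0 := rfl
    simp only [h0v, hψn, hAn, dif_pos (Nat.succ_pos m)]
    exact h0
  · -- end
    have hv : ((Fin.last (m + m' + 1)) : ℕ) = m + m' + 1 := rfl
    have hnlt : ¬ (m + m' + 1 < m + 1) := by omega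
    have hlt : m + m' + 1 - (m + 1) < m' + 1 := by omega
    simp only [hv, hψn, hBn, dif_neg hnlt, dif_pos hlt]
    have : (⟨m + m' + 1 - (m + 1), hlt⟩ : Fin (m' + 1)) = Fin.last m' := by
      apply Fin.ext; simp only [Fin.val_mk, Fin.val_last]; omega
    rw [this]
    exact hlast'
  · -- matching
    intro i
    have hcv : (i.castSucc : ℕ) = (i : ℕ) := rfl
    have hsv : (i.succ : ℕ) = (i : ℕ) + 1 := rfl
    simp only [hcv, hsv, hψn, hAn, hBn]
    rcases lt_trichotomy ((i : ℕ) + 1) (m + 1) with hc | hc | hc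
    · have h1 : (i : ℕ) < m + 1 := by omega
      simp only [dif_pos h1, dif_pos hc]
      have := hmatch ⟨(i : ℕ), by omega⟩
      have e1 : (⟨(i:ℕ), by omega⟩ : Fin m).castSucc = ⟨(i:ℕ), h1⟩ := rfl
      have e2 : (⟨(i:ℕ), by omega⟩ : Fin m).succ = ⟨(i:ℕ)+1, hc⟩ := rfl
      rw [e1, e2] at this
      exact this
    · have h1 : (i : ℕ) < m + 1 := by omega
      have h2 : ¬ ((i : ℕ) + 1 < m + 1) := by omega
      have h3 : (i : ℕ) + 1 - (m + 1) < m' + 1 := by omega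
      simp only [dif_pos h1, dif_neg h2, dif_pos h3]
      have e1 : (⟨(i:ℕ), h1⟩ : Fin (m+1)) = Fin.last m := by
        apply Fin.ext; simp only [Fin.val_mk, Fin.val_last]; omega
      have e2 : (⟨(i:ℕ) + 1 - (m+1), h3⟩ : Fin (m'+1)) = 0 := by
        apply Fin.ext; simp only [Fin.val_mk, Fin.val_zero]; omega
      rw [e1, e2, hlast, h0']
    · have h1 : ¬ ((i : ℕ) < m + 1) := by omega
      have h2 : ¬ ((i : ℕ) + 1 < m + 1) := by omega
      have h3 : (i : ℕ) - (m + 1) < m' + 1 := by have := i.isLt; omega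
      have h4 : (i : ℕ) + 1 - (m + 1) < m' + 1 := by have := i.isLt; omega
      simp only [dif_neg h1, dif_pos h3, dif_neg h2, dif_pos h4]
      have h5 : (i : ℕ) - (m + 1) < m' := by have := i.isLt; omega
      have := hmatch' ⟨(i : ℕ) - (m+1), h5⟩
      have e1 : (⟨(i:ℕ) - (m+1), h5⟩ : Fin m').castSucc = ⟨(i:ℕ) - (m+1), h3⟩ := rfl
      have e2 : (⟨(i:ℕ) - (m+1), h5⟩ : Fin m').succ = ⟨(i:ℕ) + 1 - (m+1), h4⟩ := by
        apply Fin.ext; simp only [Fin.val_succ, Fin.val_mk]; omega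
      rw [e1, e2] at this
      exact this
  · -- sum
    rw [Fin.sum_univ_eq_sum_range (fun j => poincareDist (An j) (Bn j)) (m + m' + 1 + 1)]
    have hsplit : m + m' + 1 + 1 = (m + 1) + (m' + 1) := by ring
    rw [hsplit, sum_range_split]
    congr 1
    · rw [← Fin.sum_univ_eq_sum_range (fun j => poincareDist (An j) (Bn j)) (m + 1)]
      apply Finset.sum_congr rfl
      intro i _
      have hi := i.isLt
      simp only [hAn, hBn, dif_pos hi, Fin.eta]
    · rw [← Fin.sum_univ_eq_sum_range (fun j => poincareDist (An (m + 1 + j)) (Bn (m + 1 + j))) (m' + 1)]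
      apply Finset.sum_congr rfl
      intro i _
      have hi := i.isLt
      have h1 : ¬ (m + 1 + (i : ℕ) < m + 1) := by omega
      have h2 : m + 1 + (i : ℕ) - (m + 1) < m' + 1 := by omega
      simp only [hAn, hBn, dif_neg h1, dif_pos h2]
      have e : (⟨m + 1 + (i:ℕ) - (m+1), h2⟩ : Fin (m'+1)) = i := by
        apply Fin.ext; simp only [Fin.val_mk]; omega
      rw [e]

lemma kobayashiDist_triangle {D : Set E} {p r q : E}
    (h1 : (chainSet D p r).Nonempty) (h2 : (chainSet D r q).Nonempty) :
    kobayashiDist D p q ≤ kobayashiDist D p r + kobayashiDist D r q := by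
  have main : ∀ s1 ∈ chainSet D p r, ∀ s2 ∈ chainSet D r q,
      kobayashiDist D p q ≤ s1 + s2 := by
    intro s1 hs1 s2 hs2
    obtain ⟨m, φ, a, b, hc, rfl⟩ := hs1
    obtain ⟨m', φ', a', b', hc', rfl⟩ := hs2
    exact csInf_le (chainSet_bddBelow D p q) (chain_concat hc hc')
  have step1 : ∀ s1 ∈ chainSet D p r, kobayashiDist D p q - s1 ≤ kobayashiDist D r q := by
    intro s1 hs1
    apply le_csInf h2
    intro s2 hs2
    linarith [main s1 hs1 s2 hs2]
  have step2 : kobayashiDist D p q - kobayashiDist D r q ≤ kobayashiDist D p r := by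
    apply le_csInf h1
    intro s1 hs1
    linarith [step1 s1 hs1]
  linarith

/-- Let `α : [0, t₀] → Ω` be a unit-speed Kobayashi isometric curve in
a bounded `C³` strongly convex domain, with endpoints `p = α 0` and `q = α t₀`. Let `φ`
be a complex geodesic whose image contains `p` and `q`, let `π` be a holomorphic
retraction of `Ω` onto `φ(Δ)`, and let `γ : [0, t₀] → φ(Δ)` be the real geodesic in
`φ(Δ)` from `p` to `q`. Then `π ∘ α = γ` on `[0, t₀]`. -/
theorem stmt_16 {n : ℕ} (hn : 0 < n) (Ω : Set (EuclideanSpace ℂ (Fin n)))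
    (hΩ : IsStronglyConvex Ω 3)
    (t₀ : ℝ) (ht₀ : 0 < t₀)
    (α : ℝ → EuclideanSpace ℂ (Fin n)) (hα : Set.MapsTo α (Set.Icc 0 t₀) Ω)
    (hαiso : ∀ s ∈ Set.Icc 0 t₀, ∀ t ∈ Set.Icc 0 t₀,
      kobayashiDist Ω (α s) (α t) = |s - t|)
    (φ : ℂ → EuclideanSpace ℂ (Fin n)) (hφ : IsComplexGeodesic Ω φ)
    (hp : α 0 ∈ φ '' unitDisc) (hq : α t₀ ∈ φ '' unitDisc)
    (π : EuclideanSpace ℂ (Fin n) → EuclideanSpace ℂ (Fin n))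
    (hπhol : DifferentiableOn ℂ π Ω)
    (hπmaps : Set.MapsTo π Ω (φ '' unitDisc))
    (hπretr : ∀ z ∈ φ '' unitDisc, π z = z)
    (γ : ℝ → EuclideanSpace ℂ (Fin n))
    (hγmaps : Set.MapsTo γ (Set.Icc 0 t₀) (φ '' unitDisc))
    (hγiso : ∀ s ∈ Set.Icc 0 t₀, ∀ t ∈ Set.Icc 0 t₀,
      kobayashiDist Ω (γ s) (γ t) = |s - t|)
    (hγ0 : γ 0 = α 0) (hγt₀ : γ t₀ = α t₀) :
    ∀ t ∈ Set.Icc 0 t₀, π (α t) = γ t := by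
  have hφmapsto := hφ.1
  have hφiso := hφ.2.2
  have hφΔsub : φ '' unitDisc ⊆ Ω := hφmapsto.image_subset
  have hπΩ : Set.MapsTo π Ω Ω := fun z hz => hφΔsub (hπmaps hz)
  intro t ht
  obtain ⟨ht0, ht1⟩ := ht
  rcases eq_or_lt_of_le ht0 with h0 | h0
  · subst h0
    rw [hγ0, hπretr _ hp]
  rcases eq_or_lt_of_le ht1 with h1 | h1
  · subst h1
    rw [hγt₀, hπretr _ hq]
  -- main case : 0 < t < t₀
  have ht_mem : t ∈ Set.Icc (0:ℝ) t₀ := ⟨ht0, ht1⟩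
  have h0_mem : (0:ℝ) ∈ Set.Icc (0:ℝ) t₀ := ⟨le_refl _, ht₀.le⟩
  have ht₀_mem : t₀ ∈ Set.Icc (0:ℝ) t₀ := ⟨ht₀.le, le_refl _⟩
  have k1 : kobayashiDist Ω (α 0) (α t) = t := by
    rw [hαiso 0 h0_mem t ht_mem, zero_sub, abs_neg, abs_of_pos h0]
  have k2 : kobayashiDist Ω (α t) (α t₀) = t₀ - t := by
    rw [hαiso t ht_mem t₀ ht₀_mem, abs_of_neg (by linarith), neg_sub]
  have k3 : kobayashiDist Ω (α 0) (α t₀) = t₀ := by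
    rw [hαiso 0 h0_mem t₀ ht₀_mem, zero_sub, abs_neg, abs_of_pos ht₀]
  have ne1 : (chainSet Ω (α 0) (α t)).Nonempty :=
    chainSet_nonempty_of_ne (by rw [k1]; exact ne_of_gt h0)
  have ne2 : (chainSet Ω (α t) (α t₀)).Nonempty :=
    chainSet_nonempty_of_ne (by rw [k2]; exact ne_of_gt (by linarith))
  have c1 : kobayashiDist Ω (π (α 0)) (π (α t)) ≤ t := by
    calc kobayashiDist Ω (π (α 0)) (π (α t)) ≤ kobayashiDist Ω (α 0) (α t) :=
          kobayashiDist_contract π hπhol hπΩ ne1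
      _ = t := k1
  have c2 : kobayashiDist Ω (π (α t)) (π (α t₀)) ≤ t₀ - t := by
    calc kobayashiDist Ω (π (α t)) (π (α t₀)) ≤ kobayashiDist Ω (α t) (α t₀) :=
          kobayashiDist_contract π hπhol hπΩ ne2
      _ = t₀ - t := k2
  rw [hπretr _ hp] at c1
  rw [hπretr _ hq] at c2
  have neπ1 : (chainSet Ω (α 0) (π (α t))).Nonempty := by
    obtain ⟨s, hs⟩ := ne1
    have := chainSet_map π hπhol hπΩ hs
    rw [hπretr _ hp] at this
    exact ⟨s, this⟩
  have neπ2 : (chainSet Ω (π (α t)) (α t₀)).Nonempty := by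
    obtain ⟨s, hs⟩ := ne2
    have := chainSet_map π hπhol hπΩ hs
    rw [hπretr _ hq] at this
    exact ⟨s, this⟩
  have tri : kobayashiDist Ω (α 0) (α t₀)
      ≤ kobayashiDist Ω (α 0) (π (α t)) + kobayashiDist Ω (π (α t)) (α t₀) :=
    kobayashiDist_triangle neπ1 neπ2
  have e1 : kobayashiDist Ω (α 0) (π (α t)) = t := by
    apply le_antisymm c1
    rw [k3] at tri
    linarith
  have e2 : kobayashiDist Ω (π (α t)) (α t₀) = t₀ - t := by
    apply le_antisymm c2
    rw [k3] at tri
    linarith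
  have g1 : kobayashiDist Ω (α 0) (γ t) = t := by
    have h := hγiso 0 h0_mem t ht_mem
    rw [hγ0] at h
    rw [h, zero_sub, abs_neg, abs_of_pos h0]
  have g2 : kobayashiDist Ω (γ t) (α t₀) = t₀ - t := by
    have h := hγiso t ht_mem t₀ ht₀_mem
    rw [hγt₀] at h
    rw [h, abs_of_neg (by linarith), neg_sub]
  -- pass to the disc
  obtain ⟨A, hA, hAe⟩ := hp
  obtain ⟨B, hB, hBe⟩ := hq
  obtain ⟨Zx, hZx, hZxe⟩ := hπmaps (hα ht_mem)
  obtain ⟨Zg, hZg, hZge⟩ := hγmaps ht_mem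
  have pdab : poincareDist A B = t₀ := by
    rw [← hφiso A hA B hB, hAe, hBe]; exact k3
  have pdax : poincareDist A Zx = t := by
    rw [← hφiso A hA Zx hZx, hAe, hZxe]; exact e1
  have pdxb : poincareDist Zx B = t₀ - t := by
    rw [← hφiso Zx hZx B hB, hZxe, hBe]; exact e2
  have pdag : poincareDist A Zg = t := by
    rw [← hφiso A hA Zg hZg, hAe, hZge]; exact g1
  have pdgb : poincareDist Zg B = t₀ - t := by
    rw [← hφiso Zg hZg B hB, hZge, hBe]; exact g2
  have hZZ : Zx = Zg := by
    apply disc_uniq hA hB hZx hZg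
    · rw [pdab]; exact ne_of_gt ht₀
    · rw [pdax, pdag]
    · rw [pdxb, pdgb]
    · rw [pdax, pdxb, pdab]; ring
  rw [← hZxe, hZZ, hZge]


end
end
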